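/- For all rooted trees T1, T2: if T1 ≇ T2 then δ_{T1} × δ_{T2} = Σ_T a(T1,T2;T)·δ_T + δ_{T1⊔T2}, and δ_{T1} × δ_{T1} = Σ_T a(T1,T1;T)·δ_T + 2·δ_{T1⊔T1}, where the sums are over isomorphism classes of rooted trees T and T1⊔T2 denotes the two-tree forest. Consequently, for all rooted trees T1, T2, the commutator in H satisfies δ_{T1} × δ_{T2} − δ_{T2} × δ_{T1} = Σ_T (a(T1,T2;T) − a(T2,T1;T))·δ_T. -/

import Mathlib

open scoped Classical

/-- Concrete (labeled) rooted trees: a root with a list of subtrees. -/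
inductive RTree : Type
  | node : List RTree → RTree

/-- Shapes of admissible cuts: at each tree, either the full cut
(everything, including the root, goes to the pruned part `P`), or a choice of
an admissible cut of each child subtree.  A `full` occurring strictly inside
corresponds to cutting the edge above that vertex. -/
inductive CutShape : Type
  | full
  | branch : List CutShape → CutShape

namespace CK

/-- Number of vertices of a forest. -/
def sizeL : List RTree → ℕ
  | [] => 0
  | .node l :: ts => 1 + sizeL l + sizeL ts

/-- All admissible cuts of a forest (a choice of admissible cut of each tree). -/
def cutsF : List RTree → List (List CutShape)
  | [] => [[]]
  | .node l :: ts =>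
      (CutShape.full :: (cutsF l).map CutShape.branch).flatMap
        fun c => (cutsF ts).map (c :: ·)

/-- The root part `R_C(F)` of a cut. -/
def Rcut : List RTree → List CutShape → List RTree
  | [], _ => []
  | _ :: _, [] => []
  | .node _ :: ts, .full :: cs => Rcut ts cs
  | .node l :: ts, .branch ds :: cs => RTree.node (Rcut l ds) :: Rcut ts cs

/-- The pruned part `P_C(F)` of a cut. -/
def Pcut : List RTree → List CutShape → List RTree
  | [], _ => []
  | _ :: _, [] => []
  | .node l :: ts, .full :: cs => RTree.node l :: Pcut ts cs
  | .node l :: ts, .branch ds :: cs => Pcut l ds ++ Pcut ts cs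

/-- Number of `full`s occurring in a cut. -/
def fullsL : List CutShape → ℕ
  | [] => 0
  | .full :: cs => 1 + fullsL cs
  | .branch ds :: cs => fullsL ds + fullsL cs

/-- A list of concrete forests containing (representatives of) every forest
with at most `n` vertices. -/
def forestsUpTo : ℕ → List (List RTree)
  | 0 => [[]]
  | n+1 => [] :: (forestsUpTo n).flatMap fun l => (forestsUpTo n).map fun F => RTree.node l :: F

/-- Isomorphism of rooted trees (non-planar): a root-preserving bijection, i.e.
the lists of subtrees agree up to permutation and isomorphism. -/
inductive Iso : RTree → RTree → Prop
  | node {l₁ l l₂ : List RTree} : List.Forall₂ Iso l₁ l → l.Perm l₂ → Iso (.node l₁) (.node l₂)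

/-- Isomorphism classes of rooted trees. -/
abbrev TreeClass : Type := Quot Iso

/-- Isomorphism classes of rooted forests = multisets of tree classes.
The empty forest is `0`. -/
abbrev ForestClass : Type := Multiset TreeClass

/-- Isomorphism class of a tree. -/
def clT (t : RTree) : TreeClass := Quot.mk _ t

/-- Isomorphism class of a forest. -/
def clF (F : List RTree) : ForestClass := (F.map clT : List TreeClass)

/-- A concrete representative of a forest class. -/
noncomputable def repF (M : ForestClass) : List RTree := M.toList.map Quot.out

/-- A concrete representative of a tree class. -/
noncomputable def repT (T : TreeClass) : RTree := T.out

/-- Number of vertices of a forest class. -/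
noncomputable def sizeC (M : ForestClass) : ℕ := sizeL (repF M)

/-- Number of vertices of a tree class. -/
noncomputable def sizeT (T : TreeClass) : ℕ := sizeL [repT T]

/-- The Hall algebra `H`: finitely supported ℚ-valued functions on
isomorphism classes of rooted forests, with basis the delta functions. -/
abbrev H : Type := ForestClass →₀ ℚ

/-- The basis element `δ_A` of `H`. -/
noncomputable def delta (A : ForestClass) : H := Finsupp.single A 1

/-- `n(A,B;M)`: the number of admissible cuts `C` of `M` with
`P_C(M) ≅ A` and `R_C(M) ≅ B`. -/
noncomputable def nCuts (A B M : ForestClass) : ℕ :=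
  (cutsF (repF M)).countP fun c =>
    decide (clF (Pcut (repF M) c) = A ∧ clF (Rcut (repF M) c) = B)

/-- A finite set of forest classes containing all classes with at most `n`
vertices. -/
noncomputable def forestCand (n : ℕ) : Finset ForestClass :=
  ((forestsUpTo n).map clF).toFinset

/-- A finite set of tree classes containing all classes with at most `n+1`
vertices. -/
noncomputable def treeCand (n : ℕ) : Finset TreeClass :=
  ((forestsUpTo n).map fun F => clT (RTree.node F)).toFinset

/-- The Hall product on basis elements: `δ_A × δ_B = Σ_M n(A,B;M)·δ_M`
(every `M` with `n(A,B;M) ≠ 0` has exactly `sizeC A + sizeC B` vertices). -/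
noncomputable def mulBasis (A B : ForestClass) : H :=
  ∑ M ∈ forestCand (sizeC A + sizeC B), (nCuts A B M : ℚ) • delta M

/-- The Hall product on `H`, extended bilinearly from basis elements. -/
noncomputable def hmul (f g : H) : H :=
  f.sum fun A a => g.sum fun B b => (a * b) • mulBasis A B

/-- The Connes-Kreimer Lie algebra `n_T` (as a vector space): the span of
isomorphism classes of rooted trees. -/
abbrev nT : Type := TreeClass →₀ ℚ

/-- The basis element of `n_T` corresponding to a rooted tree `T`. -/
noncomputable def tau (T : TreeClass) : nT := Finsupp.single T 1

/-- `a(T₁,T₂;T)`: the number of edges `e` of `T` such that the single-edge cut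
at `e` has pruned part `≅ T₁` and root part `≅ T₂`. -/
noncomputable def aCount (T₁ T₂ T : TreeClass) : ℕ :=
  (cutsF [repT T]).countP fun c =>
    decide (fullsL c = 1 ∧ clF (Pcut [repT T] c) = ({T₁} : Multiset TreeClass)
      ∧ clF (Rcut [repT T] c) = ({T₂} : Multiset TreeClass))

/-- The grafting (pre-Lie) product on basis elements:
`T₁ * T₂ = Σ_T a(T₁,T₂;T)·T`. -/
noncomputable def graftBasis (T₁ T₂ : TreeClass) : nT :=
  ∑ T ∈ treeCand (sizeT T₁ + sizeT T₂), (aCount T₁ T₂ T : ℚ) • tau T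

/-- The grafting (pre-Lie) product on `n_T`, extended bilinearly. -/
noncomputable def graft (x y : nT) : nT :=
  x.sum fun T₁ a => y.sum fun T₂ b => (a * b) • graftBasis T₁ T₂

/-- The Connes-Kreimer bracket `[x,y] = x*y - y*x` on `n_T`. -/
noncomputable def ckBracket (x y : nT) : nT := graft x y - graft y x

/-- `Ẽ_A δ_B = Σ_C δ_{R_C(B)}`, the sum over admissible cuts `C` of `B` with
`P_C(B) ≅ A`. -/
noncomputable def elimBasis (A B : ForestClass) : H :=
  (((cutsF (repF B)).filter fun c => decide (clF (Pcut (repF B) c) = A)).map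
    fun c => delta (clF (Rcut (repF B) c))).sum

/-- The elimination operator `E_A` (here on `H ≅ H*`, identifying `φ_B` with
`δ_B`). -/
noncomputable def elim (A : ForestClass) : H →ₗ[ℚ] H :=
  Finsupp.lsum ℚ fun B => LinearMap.toSpanSingleton ℚ H (elimBasis A B)

/-- `Ẽ^top_A δ_B = Σ_C δ_{P_C(B)}`, the sum over admissible cuts `C` of `B`
with `R_C(B) ≅ A`. -/
noncomputable def topElimBasis (A B : ForestClass) : H :=
  (((cutsF (repF B)).filter fun c => decide (clF (Rcut (repF B) c) = A)).map
    fun c => delta (clF (Pcut (repF B) c))).sum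

/-- The top-elimination operator `E^top_A`. -/
noncomputable def topElim (A : ForestClass) : H →ₗ[ℚ] H :=
  Finsupp.lsum ℚ fun B => LinearMap.toSpanSingleton ℚ H (topElimBasis A B)

/-- `H ⊗ H`, realized as finitely supported functions on pairs of classes. -/
abbrev H2 : Type := (ForestClass × ForestClass) →₀ ℚ

/-- `Δ(δ_M) = Σ δ_A ⊗ δ_B`, the sum over ordered pairs `(A,B)` of classes with
`A ⊔ B ≅ M`. -/
noncomputable def deltaBasis (M : ForestClass) : H2 :=
  ∑ A ∈ M.powerset.toFinset, Finsupp.single (A, M - A) 1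

/-- The coproduct `Δ : H → H ⊗ H`. -/
noncomputable def coprod : H →ₗ[ℚ] H2 :=
  Finsupp.lsum ℚ fun M => LinearMap.toSpanSingleton ℚ H2 (deltaBasis M)

/-!
The pruned part of an admissible cut has one tree for each `full` in the cut, and every tree of
the forest that is not cut whole contributes one tree to the root part. Hence a cut of `M` with
pruned part `T₁` and root part `T₂` either cuts a single edge of a tree `M = T`, which is what
`a(T₁,T₂;T)` counts, or `M = T₁ ⊔ T₂` and the cut removes one of its two trees whole. The latter
can be done in two ways when `T₁ ≅ T₂` and in one way otherwise; in the commutator these forest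
terms cancel.
-/

lemma _root_.List.countP_eq_countP_of_nodup {α : Type*} {l l' : List α} {p : α → Bool}
    (hl : l.Nodup) (hl' : l'.Nodup) (h : ∀ a, p a → (a ∈ l ↔ a ∈ l')) :
    l.countP p = l'.countP p := by
  rw [List.countP_eq_length_filter, List.countP_eq_length_filter]
  refine ((List.perm_ext_iff_of_nodup (hl.filter p) (hl'.filter p)).2 fun a => ?_).length_eq
  simp only [List.mem_filter]
  exact ⟨fun ⟨ha, hp⟩ => ⟨(h a hp).1 ha, hp⟩, fun ⟨ha, hp⟩ => ⟨(h a hp).2 ha, hp⟩⟩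

lemma _root_.Multiset.singleton_add_singleton_eq_iff {α : Type*} {a b c d : α} :
    ({a} : Multiset α) + {b} = {c} + {d} ↔ (a = c ∧ b = d) ∨ (a = d ∧ b = c) := by
  simp only [Multiset.singleton_add, Multiset.cons_eq_cons, Multiset.singleton_inj,
    Multiset.singleton_eq_cons_iff]
  grind

def sizeR : RTree → ℕ
  | .node l => 1 + sizeL l

lemma sizeL_cons (t : RTree) (ts : List RTree) : sizeL (t :: ts) = sizeR t + sizeL ts := by
  cases t; simp [sizeL, sizeR]

lemma sizeL_eq_sum (F : List RTree) : sizeL F = (F.map sizeR).sum := by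
  induction F with
  | nil => simp [sizeL]
  | cons t ts ih => rw [sizeL_cons, List.map_cons, List.sum_cons, ih]

lemma sizeL_append (F G : List RTree) : sizeL (F ++ G) = sizeL F + sizeL G := by
  simp only [sizeL_eq_sum, List.map_append, List.sum_append]

mutual

lemma sizeR_eq_of_iso : ∀ {t t' : RTree}, Iso t t' → sizeR t = sizeR t'
  | _, _, .node h₁ h₂ => by
    simp only [sizeR, sizeL_eq_of_forall₂ h₁, sizeL_eq_sum, (h₂.map sizeR).sum_eq]

lemma sizeL_eq_of_forall₂ : ∀ {F G : List RTree}, List.Forall₂ Iso F G → sizeL F = sizeL G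
  | _, _, .nil => rfl
  | _, _, .cons h hs => by rw [sizeL_cons, sizeL_cons, sizeR_eq_of_iso h, sizeL_eq_of_forall₂ hs]

end

noncomputable def sizeQ : TreeClass → ℕ := Quot.lift sizeR fun _ _ => sizeR_eq_of_iso

lemma sizeR_out (T : TreeClass) : sizeR T.out = sizeQ T := by
  conv_rhs => rw [← Quot.out_eq T]
  rfl

lemma sizeC_eq_sum (M : ForestClass) : sizeC M = (M.map sizeQ).sum := by
  rw [sizeC, repF, sizeL_eq_sum, List.map_map, ← Multiset.sum_coe, ← Multiset.map_coe,
    Multiset.coe_toList]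
  exact congrArg _ (Multiset.map_congr rfl fun T _ => sizeR_out T)

lemma sizeC_clF (F : List RTree) : sizeC (clF F) = sizeL F := by
  rw [sizeC_eq_sum, clF, Multiset.map_coe, List.map_map, Multiset.sum_coe, sizeL_eq_sum]
  rfl

lemma sizeC_singleton (T : TreeClass) : sizeC {T} = sizeT T := by
  rw [sizeC_eq_sum, Multiset.map_singleton, Multiset.sum_singleton, sizeT, repT, sizeL_cons,
    sizeR_out, sizeL, add_zero]

lemma clF_singleton (t : RTree) : clF [t] = {clT t} := rfl

lemma clF_pair (s s' : RTree) : clF [s, s'] = {clT s} + {clT s'} := rfl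

lemma length_eq_one_of_clF_eq_singleton {F : List RTree} {T : TreeClass} (h : clF F = {T}) :
    F.length = 1 := by
  simpa [clF] using congrArg Multiset.card h

lemma clF_repF (M : ForestClass) : clF (repF M) = M := by
  rw [clF, repF, List.map_map]
  conv_rhs => rw [← Multiset.coe_toList M, ← List.map_id M.toList]
  exact congrArg _ (List.map_congr_left fun T _ => Quot.out_eq T)

lemma repF_singleton (T : TreeClass) : repF {T} = [repT T] := by
  rw [repF, Multiset.toList_singleton]
  rfl

lemma length_repF (M : ForestClass) : (repF M).length = Multiset.card M := by
  simp [repF]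

lemma mem_forestsUpTo {n : ℕ} {F : List RTree} (h : sizeL F ≤ n) : F ∈ forestsUpTo n := by
  induction n generalizing F with
  | zero =>
    match F with
    | [] => simp [forestsUpTo]
    | .node l :: ts => simp [sizeL] at h
  | succ n ih =>
    match F with
    | [] => simp [forestsUpTo]
    | .node l :: ts =>
      simp only [sizeL] at h
      simp only [forestsUpTo, List.mem_cons, List.mem_flatMap, List.mem_map]
      exact .inr ⟨l, ih (by omega), ts, ih (by omega), rfl⟩

lemma mem_forestCand {M : ForestClass} {n : ℕ} (h : sizeC M ≤ n) : M ∈ forestCand n :=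
  List.mem_toFinset.2 (List.mem_map.2 ⟨repF M, mem_forestsUpTo h, clF_repF M⟩)

lemma mem_treeCand {T : TreeClass} {n : ℕ} (h : sizeT T ≤ n + 1) : T ∈ treeCand n := by
  obtain ⟨l, hl⟩ : ∃ l, T.out = .node l := by cases T.out; exact ⟨_, rfl⟩
  refine List.mem_toFinset.2 (List.mem_map.2 ⟨l, mem_forestsUpTo ?_, ?_⟩)
  · rw [sizeT, repT, hl] at h
    simp only [sizeL] at h
    omega
  · rw [← hl]; exact Quot.out_eq T

lemma mem_cutsF_cons {l ts : List RTree} {c : List CutShape} :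
    c ∈ cutsF (.node l :: ts) ↔
      (∃ cs ∈ cutsF ts, c = .full :: cs) ∨
      (∃ ds ∈ cutsF l, ∃ cs ∈ cutsF ts, c = .branch ds :: cs) := by
  simp only [cutsF, List.mem_flatMap, List.mem_cons, List.mem_map]
  constructor
  · rintro ⟨c₁, (rfl | ⟨ds, hds, rfl⟩), cs, hcs, rfl⟩
    · exact .inl ⟨cs, hcs, rfl⟩
    · exact .inr ⟨ds, hds, cs, hcs, rfl⟩
  · rintro (⟨cs, hcs, rfl⟩ | ⟨ds, hds, cs, hcs, rfl⟩)
    · exact ⟨.full, .inl rfl, cs, hcs, rfl⟩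
    · exact ⟨.branch ds, .inr ⟨ds, hds, rfl⟩, cs, hcs, rfl⟩

lemma cutsF_nodup (F : List RTree) : (cutsF F).Nodup := by
  induction F using cutsF.induct with
  | case1 => simp [cutsF]
  | case2 l ts ihts ihl =>
    rw [cutsF, List.nodup_flatMap]
    refine ⟨fun _ _ => ihts.map fun _ _ h => (List.cons.inj h).2, ?_⟩
    refine (List.nodup_cons.2 ⟨by simp, ihl.map fun _ _ => CutShape.branch.inj⟩).imp ?_
    intro c c' hne cs hc hc'
    obtain ⟨_, _, rfl⟩ := List.mem_map.1 hc
    obtain ⟨_, _, h⟩ := List.mem_map.1 hc'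
    exact hne (List.cons.inj h).1.symm

/-- Number of trees of the forest that the cut removes entirely. -/
def topFullsL : List CutShape → ℕ
  | [] => 0
  | .full :: cs => 1 + topFullsL cs
  | .branch _ :: cs => topFullsL cs

lemma topFullsL_le_fullsL (c : List CutShape) : topFullsL c ≤ fullsL c := by
  induction c using fullsL.induct <;> simp only [topFullsL, fullsL] <;> omega

lemma length_Pcut {F : List RTree} {c : List CutShape} (hc : c ∈ cutsF F) :
    (Pcut F c).length = fullsL c := by
  induction F using cutsF.induct generalizing c with
  | case1 => simp_all [cutsF, Pcut, fullsL]
  | case2 l ts ihts ihl =>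
    rcases mem_cutsF_cons.1 hc with ⟨cs, hcs, rfl⟩ | ⟨ds, hds, cs, hcs, rfl⟩
    · simp only [Pcut, fullsL, List.length_cons, ihts hcs]; omega
    · simp only [Pcut, fullsL, List.length_append, ihts hcs, ihl hds]

lemma length_Rcut_add_topFullsL {F : List RTree} {c : List CutShape} (hc : c ∈ cutsF F) :
    (Rcut F c).length + topFullsL c = F.length := by
  induction F using cutsF.induct generalizing c with
  | case1 => simp_all [cutsF, Rcut, topFullsL]
  | case2 l ts ihts ihl =>
    rcases mem_cutsF_cons.1 hc with ⟨cs, hcs, rfl⟩ | ⟨ds, hds, cs, hcs, rfl⟩ <;>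
      simp only [Rcut, topFullsL, List.length_cons, ← ihts hcs] <;> omega

lemma sizeL_Pcut_add_sizeL_Rcut {F : List RTree} {c : List CutShape} (hc : c ∈ cutsF F) :
    sizeL (Pcut F c) + sizeL (Rcut F c) = sizeL F := by
  induction F using cutsF.induct generalizing c with
  | case1 => simp_all [cutsF, Pcut, Rcut, sizeL]
  | case2 l ts ihts ihl =>
    rcases mem_cutsF_cons.1 hc with ⟨cs, hcs, rfl⟩ | ⟨ds, hds, cs, hcs, rfl⟩
    · simp only [Pcut, Rcut, sizeL, ← ihts hcs]; omega
    · have := ihl hds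
      simp only [Pcut, Rcut, sizeL, sizeL_append, ← ihts hcs]; omega

def emptyCutF : List RTree → List CutShape
  | [] => []
  | .node l :: ts => .branch (emptyCutF l) :: emptyCutF ts

def emptyCutT : RTree → CutShape
  | .node l => .branch (emptyCutF l)

lemma emptyCutF_singleton (t : RTree) : emptyCutF [t] = [emptyCutT t] := by
  cases t; simp [emptyCutF, emptyCutT]

lemma emptyCutF_mem_cutsF (F : List RTree) : emptyCutF F ∈ cutsF F := by
  induction F using emptyCutF.induct with
  | case1 => simp [emptyCutF, cutsF]
  | case2 l ts ihl ihts =>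
    exact mem_cutsF_cons.2 (.inr ⟨_, ihl, _, ihts, by simp [emptyCutF]⟩)

lemma Pcut_emptyCutF (F : List RTree) : Pcut F (emptyCutF F) = [] := by
  induction F using emptyCutF.induct <;> simp_all [emptyCutF, Pcut]

lemma Rcut_emptyCutF (F : List RTree) : Rcut F (emptyCutF F) = F := by
  induction F using emptyCutF.induct <;> simp_all [emptyCutF, Rcut]

lemma eq_emptyCutF_of_fullsL_eq_zero {F : List RTree} {c : List CutShape} (hc : c ∈ cutsF F)
    (h : fullsL c = 0) : c = emptyCutF F := by
  induction F using cutsF.induct generalizing c with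
  | case1 => simp_all [cutsF, emptyCutF]
  | case2 l ts ihts ihl =>
    rcases mem_cutsF_cons.1 hc with ⟨cs, hcs, rfl⟩ | ⟨ds, hds, cs, hcs, rfl⟩
    · simp [fullsL] at h
    · simp only [fullsL] at h
      rw [emptyCutF, ihl hds (by omega), ihts hcs (by omega)]

lemma full_emptyCutT_mem_cutsF (s s' : RTree) : [.full, emptyCutT s'] ∈ cutsF [s, s'] := by
  obtain ⟨l⟩ := s
  exact mem_cutsF_cons.2 (.inl ⟨_, emptyCutF_mem_cutsF [s'], by rw [emptyCutF_singleton]⟩)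

lemma emptyCutT_full_mem_cutsF (s s' : RTree) : [emptyCutT s, .full] ∈ cutsF [s, s'] := by
  obtain ⟨l⟩ := s
  obtain ⟨l'⟩ := s'
  refine mem_cutsF_cons.2 (.inr ⟨_, emptyCutF_mem_cutsF l, _, ?_, rfl⟩)
  exact mem_cutsF_cons.2 (.inl ⟨[], by simp [cutsF], rfl⟩)

lemma Pcut_full_emptyCutT (s s' : RTree) : Pcut [s, s'] [.full, emptyCutT s'] = [s] := by
  obtain ⟨l⟩ := s
  rw [Pcut, ← emptyCutF_singleton, Pcut_emptyCutF]

lemma Rcut_full_emptyCutT (s s' : RTree) : Rcut [s, s'] [.full, emptyCutT s'] = [s'] := by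
  obtain ⟨l⟩ := s
  rw [Rcut, ← emptyCutF_singleton, Rcut_emptyCutF]

lemma Pcut_emptyCutT_full (s s' : RTree) : Pcut [s, s'] [emptyCutT s, .full] = [s'] := by
  obtain ⟨l⟩ := s
  obtain ⟨l'⟩ := s'
  simp [emptyCutT, Pcut, Pcut_emptyCutF]

lemma Rcut_emptyCutT_full (s s' : RTree) : Rcut [s, s'] [emptyCutT s, .full] = [s] := by
  obtain ⟨l⟩ := s
  obtain ⟨l'⟩ := s'
  simp [emptyCutT, Rcut, Rcut_emptyCutF]

lemma eq_of_mem_cutsF_pair {s s' : RTree} {c : List CutShape} (hc : c ∈ cutsF [s, s'])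
    (hP : (Pcut [s, s'] c).length = 1) (hR : (Rcut [s, s'] c).length = 1) :
    c = [.full, emptyCutT s'] ∨ c = [emptyCutT s, .full] := by
  have hfulls : fullsL c = 1 := length_Pcut hc ▸ hP
  have htop : topFullsL c = 1 := by
    have := length_Rcut_add_topFullsL hc
    simp only [hR, List.length_cons, List.length_nil] at this
    omega
  obtain ⟨l⟩ := s
  obtain ⟨l'⟩ := s'
  rcases mem_cutsF_cons.1 hc with ⟨cs, hcs, rfl⟩ | ⟨ds, hds, cs, hcs, rfl⟩
  · left
    simp only [fullsL] at hfulls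
    rw [eq_emptyCutF_of_fullsL_eq_zero hcs (by omega), emptyCutF_singleton]
  · right
    rcases mem_cutsF_cons.1 hcs with ⟨cs', hcs', rfl⟩ | ⟨_, _, cs', hcs', rfl⟩ <;>
      simp only [cutsF, List.mem_singleton] at hcs' <;> subst hcs'
    · simp only [fullsL] at hfulls
      rw [emptyCutT, eq_emptyCutF_of_fullsL_eq_zero hds (by omega)]
    · simp [topFullsL] at htop

lemma countP_cutsF_pair (s s' : RTree) (T₁ T₂ : TreeClass) :
    (cutsF [s, s']).countP
        (fun c => decide (clF (Pcut [s, s'] c) = {T₁} ∧ clF (Rcut [s, s'] c) = {T₂}))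
      = (if clT s = T₁ ∧ clT s' = T₂ then 1 else 0)
        + (if clT s' = T₁ ∧ clT s = T₂ then 1 else 0) := by
  have hne : [CutShape.full, emptyCutT s'] ≠ [emptyCutT s, .full] := by cases s; simp [emptyCutT]
  rw [List.countP_eq_countP_of_nodup (l' := [[.full, emptyCutT s'], [emptyCutT s, .full]])
    (cutsF_nodup _) (by simp [hne])]
  · simp only [List.countP_cons, List.countP_nil, Pcut_full_emptyCutT, Rcut_full_emptyCutT,
      Pcut_emptyCutT_full, Rcut_emptyCutT_full, clF_singleton, Multiset.singleton_inj,
      decide_eq_true_eq, zero_add]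
    exact add_comm _ _
  · intro c hc
    rw [decide_eq_true_iff] at hc
    simp only [List.mem_cons, List.not_mem_nil, or_false]
    constructor
    · intro hmem
      exact eq_of_mem_cutsF_pair hmem (length_eq_one_of_clF_eq_singleton hc.1)
        (length_eq_one_of_clF_eq_singleton hc.2)
    · rintro (rfl | rfl)
      · exact full_emptyCutT_mem_cutsF s s'
      · exact emptyCutT_full_mem_cutsF s s'

lemma nCuts_singleton (T₁ T₂ T : TreeClass) : nCuts {T₁} {T₂} {T} = aCount T₁ T₂ T := by
  rw [nCuts, aCount, repF_singleton]
  refine List.countP_congr fun c hc => ?_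
  simp only [decide_eq_true_eq]
  refine ⟨fun h => ⟨?_, h⟩, fun h => h.2⟩
  rw [← length_Pcut hc, length_eq_one_of_clF_eq_singleton h.1]

lemma exists_cut_of_nCuts_ne_zero {A B M : ForestClass} (h : nCuts A B M ≠ 0) :
    ∃ c ∈ cutsF (repF M), clF (Pcut (repF M) c) = A ∧ clF (Rcut (repF M) c) = B := by
  obtain ⟨c, hc, hp⟩ := List.countP_pos_iff.1 (Nat.pos_of_ne_zero h)
  exact ⟨c, hc, of_decide_eq_true hp⟩

lemma sizeC_eq_of_nCuts_ne_zero {A B M : ForestClass} (h : nCuts A B M ≠ 0) :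
    sizeC M = sizeC A + sizeC B := by
  obtain ⟨c, hc, rfl, rfl⟩ := exists_cut_of_nCuts_ne_zero h
  rw [sizeC_clF, sizeC_clF, sizeL_Pcut_add_sizeL_Rcut hc, sizeC]

lemma card_eq_one_or_eq_pair_of_nCuts_ne_zero {T₁ T₂ : TreeClass} {M : ForestClass}
    (h : nCuts {T₁} {T₂} M ≠ 0) : Multiset.card M = 1 ∨ M = {T₁} + {T₂} := by
  obtain ⟨c, hc, hP, hR⟩ := exists_cut_of_nCuts_ne_zero h
  have hPlen := length_eq_one_of_clF_eq_singleton hP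
  have hRlen := length_eq_one_of_clF_eq_singleton hR
  have hcard : Multiset.card M = 1 + topFullsL c := by
    rw [← length_repF, ← length_Rcut_add_topFullsL hc, hRlen]
  have htop : topFullsL c ≤ 1 := by
    rw [← hPlen, length_Pcut hc]; exact topFullsL_le_fullsL c
  rcases Nat.le_one_iff_eq_zero_or_eq_one.1 htop with h0 | h1
  · exact .inl (by omega)
  · right
    obtain ⟨s, s', hss⟩ := List.length_eq_two.1 ((length_repF M).trans (by omega))
    rw [hss] at hc hP hR hPlen hRlen
    rw [← clF_repF M, hss, clF_pair]
    rcases eq_of_mem_cutsF_pair hc hPlen hRlen with rfl | rfl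
    · rw [Pcut_full_emptyCutT, clF_singleton] at hP
      rw [Rcut_full_emptyCutT, clF_singleton] at hR
      rw [hP, hR]
    · rw [Pcut_emptyCutT_full, clF_singleton] at hP
      rw [Rcut_emptyCutT_full, clF_singleton] at hR
      rw [hP, hR, add_comm]

lemma nCuts_pair (T₁ T₂ : TreeClass) :
    nCuts {T₁} {T₂} ({T₁} + {T₂}) = if T₁ = T₂ then 2 else 1 := by
  obtain ⟨s, s', hss⟩ : ∃ s s', repF ({T₁} + {T₂}) = [s, s'] :=
    List.length_eq_two.1 (by simp [length_repF])
  have hpair : {clT s} + {clT s'} = ({T₁} + {T₂} : ForestClass) := by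
    rw [← clF_pair, ← hss, clF_repF]
  rw [nCuts, hss, countP_cutsF_pair]
  rcases Multiset.singleton_add_singleton_eq_iff.1 hpair with ⟨rfl, rfl⟩ | ⟨rfl, rfl⟩ <;>
    by_cases h : clT s = clT s' <;> simp [h, eq_comm]

lemma mem_support_of_nCuts_ne_zero {T₁ T₂ : TreeClass} {M : ForestClass}
    (h : nCuts {T₁} {T₂} M ≠ 0) :
    M ∈ insert ({T₁} + {T₂}) ((treeCand (sizeT T₁ + sizeT T₂)).image ({·})) := by
  rcases card_eq_one_or_eq_pair_of_nCuts_ne_zero h with hcard | rfl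
  · obtain ⟨T, rfl⟩ := Multiset.card_eq_one.1 hcard
    have hsize := sizeC_eq_of_nCuts_ne_zero h
    rw [sizeC_singleton, sizeC_singleton, sizeC_singleton] at hsize
    exact Finset.mem_insert_of_mem (Finset.mem_image_of_mem _ (mem_treeCand (by omega)))
  · exact Finset.mem_insert_self _ _

lemma mulBasis_singleton_singleton (T₁ T₂ : TreeClass) :
    mulBasis {T₁} {T₂}
      = (∑ T ∈ treeCand (sizeT T₁ + sizeT T₂), (aCount T₁ T₂ T : ℚ) • delta {T})
        + (nCuts {T₁} {T₂} ({T₁} + {T₂}) : ℚ) • delta ({T₁} + {T₂}) := by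
  set f : ForestClass → H := fun M => (nCuts {T₁} {T₂} M : ℚ) • delta M
  have hf : ∀ M, f M ≠ 0 → nCuts {T₁} {T₂} M ≠ 0 := fun M hM h0 => hM (by simp [f, h0])
  have hpair : ({T₁} + {T₂} : ForestClass) ∉ (treeCand (sizeT T₁ + sizeT T₂)).image ({·}) := by
    simp only [Finset.mem_image, not_exists, not_and]
    intro T _ h
    simpa using congrArg Multiset.card h
  calc mulBasis {T₁} {T₂}
      = ∑ M ∈ insert ({T₁} + {T₂}) ((treeCand (sizeT T₁ + sizeT T₂)).image ({·})), f M := by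
        refine Finset.sum_congr_of_eq_on_inter (fun M _ hM => ?_) (fun M _ hM => ?_)
          (fun _ _ _ => rfl)
        · by_contra h
          exact hM (mem_support_of_nCuts_ne_zero (hf M h))
        · by_contra h
          exact hM (mem_forestCand (sizeC_eq_of_nCuts_ne_zero (hf M h)).le)
    _ = f ({T₁} + {T₂}) + ∑ T ∈ treeCand (sizeT T₁ + sizeT T₂), f {T} := by
        rw [Finset.sum_insert hpair, Finset.sum_image fun _ _ _ _ => Multiset.singleton_inj.1]
    _ = _ := by simp only [f, nCuts_singleton, add_comm]

lemma hmul_delta_delta (A B : ForestClass) : hmul (delta A) (delta B) = mulBasis A B := by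
  simp [hmul, delta]

lemma hmul_delta_singleton_delta_singleton (T₁ T₂ : TreeClass) :
    hmul (delta {T₁}) (delta {T₂})
      = (∑ T ∈ treeCand (sizeT T₁ + sizeT T₂), (aCount T₁ T₂ T : ℚ) • delta {T})
        + ((if T₁ = T₂ then 2 else 1 : ℕ) : ℚ) • delta ({T₁} + {T₂}) := by
  rw [hmul_delta_delta, mulBasis_singleton_singleton, nCuts_pair]

/-- For rooted trees `T₁ ≇ T₂`,
`δ_{T₁} × δ_{T₂} = Σ_T a(T₁,T₂;T)·δ_T + δ_{T₁⊔T₂}`, while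
`δ_{T₁} × δ_{T₁} = Σ_T a(T₁,T₁;T)·δ_T + 2·δ_{T₁⊔T₁}` (the sums over
isomorphism classes of rooted trees `T`; they are supported on trees with
`|T₁| + |T₂|` vertices, hence captured by the finite candidate set).
Consequently
`δ_{T₁} × δ_{T₂} − δ_{T₂} × δ_{T₁} = Σ_T (a(T₁,T₂;T) − a(T₂,T₁;T))·δ_T`. -/
theorem hall_product_of_trees :
    (∀ T₁ T₂ : TreeClass, T₁ ≠ T₂ →
      hmul (delta {T₁}) (delta {T₂})
        = (∑ T ∈ treeCand (sizeT T₁ + sizeT T₂),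
            (aCount T₁ T₂ T : ℚ) • delta ({T} : Multiset TreeClass))
          + delta (({T₁} : Multiset TreeClass) + {T₂})) ∧
    (∀ T₁ : TreeClass,
      hmul (delta {T₁}) (delta {T₁})
        = (∑ T ∈ treeCand (sizeT T₁ + sizeT T₁),
            (aCount T₁ T₁ T : ℚ) • delta ({T} : Multiset TreeClass))
          + (2 : ℚ) • delta (({T₁} : Multiset TreeClass) + {T₁})) ∧
    (∀ T₁ T₂ : TreeClass,
      hmul (delta {T₁}) (delta {T₂}) - hmul (delta {T₂}) (delta {T₁})
        = ∑ T ∈ treeCand (sizeT T₁ + sizeT T₂),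
            ((aCount T₁ T₂ T : ℚ) - (aCount T₂ T₁ T : ℚ))
              • delta ({T} : Multiset TreeClass)) := by
  refine ⟨fun T₁ T₂ h => ?_, fun T₁ => ?_, fun T₁ T₂ => ?_⟩
  · rw [hmul_delta_singleton_delta_singleton, if_neg h, Nat.cast_one, one_smul]
  · rw [hmul_delta_singleton_delta_singleton, if_pos rfl, Nat.cast_ofNat]
  · rcases eq_or_ne T₁ T₂ with rfl | h
    · simp
    · rw [hmul_delta_singleton_delta_singleton, hmul_delta_singleton_delta_singleton, if_neg h,
        if_neg h.symm, add_comm (sizeT T₂), add_comm ({T₂} : ForestClass), add_sub_add_right_eq_sub]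
      simp only [sub_smul, Finset.sum_sub_distrib]

end CK
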